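/- Let $(W_{ij})_{(i,j)\in\mathbb{N}^2}$ be a separately exchangeable, dissociated array of random vectors, let $f$ be a bounded measurable function with $E[f(W_{11})] = \mu$, and let $(Z_{ij})$ be i.i.d. Bernoulli$(p_{NM})$ with $p_{NM} NM \to \infty$, independent of the data. Then $\hat L^{-1} \sum_{i=1}^N \sum_{j=1}^M Z_{ij} f(W_{ij}) \to \mu$ in probability as $\min\{N,M\} \to \infty$, where $\hat L = \sum_{i,j} Z_{ij}$. -/

import Mathlib

open MeasureTheory ProbabilityTheory Filter
open scoped ENNReal Topology

/-- Separate exchangeability of a two-way array: for all permutations `π₁, π₂` of `ℕ`,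
`(W_{π₁(i) π₂(j)})` has the same (joint) distribution as `(W_{ij})`. -/
def SepExch {Ω E : Type*} [MeasurableSpace Ω] [MeasurableSpace E]
    (μ : Measure Ω) (W : ℕ → ℕ → Ω → E) : Prop :=
  ∀ π₁ π₂ : Equiv.Perm ℕ,
    Measure.map (fun ω (ij : ℕ × ℕ) => W (π₁ ij.1) (π₂ ij.2) ω) μ =
      Measure.map (fun ω (ij : ℕ × ℕ) => W ij.1 ij.2 ω) μ

/-- Dissociation of a two-way array: for all `(c₁, c₂)`, the subarray with indices
`i < c₁, j < c₂` is independent of the subarray with indices `i ≥ c₁, j ≥ c₂`. -/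
def Dissociated {Ω E : Type*} [MeasurableSpace Ω] [MeasurableSpace E]
    (μ : Measure Ω) (W : ℕ → ℕ → Ω → E) : Prop :=
  ∀ c₁ c₂ : ℕ,
    IndepFun
      (fun ω (ij : {q : ℕ × ℕ // q.1 < c₁ ∧ q.2 < c₂}) => W ij.1.1 ij.1.2 ω)
      (fun ω (ij : {q : ℕ × ℕ // c₁ ≤ q.1 ∧ c₂ ≤ q.2}) => W ij.1.1 ij.1.2 ω) μ

/-!
Write `S = ∑ Z_{ij} f(W_{ij})` and `L = ∑ Z_{ij}` over the `N × M` grid, and `a = N M p`.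
Since the selectors are independent of the data, `cov(Z_q f(W_q), Z_r f(W_r))` factors through
`E[Z_q Z_r] E[f(W_q) f(W_r)]`; it is at most `p C²` on the diagonal, at most `p² C²` when the
cells `q ≠ r` share a row or a column (about `N M (N + M)` pairs), and it vanishes otherwise,
because then `(W_q, W_r)` has, by separate exchangeability, the law of `(W_{00}, W_{11})`,
whose components are independent by dissociation. Hence `Var(S / a) = O(1/a + 1/N + 1/M) → 0`,
so `S / a → m₀` in probability by Chebyshev, and likewise `L / a → 1` (the case `f = 1`).
The ratio `L⁻¹ S` then converges by the continuous mapping theorem at the point `(1, m₀)`.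
-/

open Finset

namespace MeasureTheory

variable {Ω ι : Type*} [MeasurableSpace Ω] {μ : Measure Ω} {l : Filter ι}

theorem TendstoInMeasure.prodMk {E F : Type*} [PseudoEMetricSpace E] [PseudoEMetricSpace F]
    {X : ι → Ω → E} {Y : ι → Ω → F} {x : Ω → E} {y : Ω → F}
    (hX : TendstoInMeasure μ X l x) (hY : TendstoInMeasure μ Y l y) :
    TendstoInMeasure μ (fun i ω => (X i ω, Y i ω)) l (fun ω => (x ω, y ω)) := by
  intro ε hε
  have hsum := (hX ε hε).add (hY ε hε)
  rw [add_zero] at hsum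
  refine tendsto_of_tendsto_of_tendsto_of_le_of_le tendsto_const_nhds hsum (fun _ => zero_le)
    fun i => (measure_mono fun ω hω => ?_).trans (measure_union_le _ _)
  simpa only [Set.mem_ofPred_eq, Set.mem_union, Prod.edist_eq, le_max_iff] using hω

theorem TendstoInMeasure.comp_continuousAt {E F : Type*} [PseudoMetricSpace E]
    [PseudoMetricSpace F] {X : ι → Ω → E} {x : E} {φ : E → F}
    (hX : TendstoInMeasure μ X l (fun _ => x)) (hφ : ContinuousAt φ x) :
    TendstoInMeasure μ (fun i ω => φ (X i ω)) l (fun _ => φ x) := by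
  rw [tendstoInMeasure_iff_dist] at hX ⊢
  intro ε hε
  obtain ⟨δ, hδ, hφδ⟩ := Metric.continuousAt_iff.1 hφ ε hε
  refine tendsto_of_tendsto_of_tendsto_of_le_of_le tendsto_const_nhds (hX δ hδ)
    (fun _ => zero_le) fun i => measure_mono fun ω hω => ?_
  by_contra h
  exact (not_le.2 (hφδ (not_le.1 h))) hω

theorem tendstoInMeasure_const_of_variance_tendsto_zero [IsFiniteMeasure μ] {X : ι → Ω → ℝ}
    {c : ℝ} (hX : ∀ i, MemLp (X i) 2 μ) (hmean : ∀ᶠ i in l, μ[X i] = c)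
    (hvar : Tendsto (fun i => Var[X i; μ]) l (𝓝 0)) :
    TendstoInMeasure μ X l (fun _ => c) := by
  rw [tendstoInMeasure_iff_dist]
  intro ε hε
  have hbound : Tendsto (fun i => ENNReal.ofReal (Var[X i; μ] / ε ^ 2)) l (𝓝 0) := by
    simpa using ENNReal.tendsto_ofReal (hvar.div_const (ε ^ 2))
  refine tendsto_of_tendsto_of_tendsto_of_le_of_le' tendsto_const_nhds hbound
    (Eventually.of_forall fun _ => zero_le) ?_
  filter_upwards [hmean] with i hi
  simpa only [Real.dist_eq, hi] using meas_ge_le_variance_div_sq (hX i) hε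

end MeasureTheory

theorem Equiv.Perm.exists_apply_zero_apply_one {i k : ℕ} (h : i ≠ k) :
    ∃ π : Equiv.Perm ℕ, π 0 = i ∧ π 1 = k := by
  set σ := Equiv.swap 0 i
  have hk : σ.symm k ≠ 0 := fun h0 => h (by simpa [σ] using congrArg σ h0.symm)
  refine ⟨σ * Equiv.swap 1 (σ.symm k), ?_, by simp⟩
  rw [Equiv.Perm.mul_apply, Equiv.swap_apply_of_ne_of_ne zero_ne_one hk.symm]
  simp [σ]

section ExchangeableArray

variable {Ω E : Type*} [MeasurableSpace Ω] [MeasurableSpace E] {μ : Measure Ω}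
  {W : ℕ → ℕ → Ω → E}

theorem SepExch.integral_comp_perm (hexch : SepExch μ W) (hW : ∀ i j, Measurable (W i j))
    {Φ : (ℕ × ℕ → E) → ℝ} (hΦ : Measurable Φ) (π₁ π₂ : Equiv.Perm ℕ) :
    ∫ ω, Φ (fun ij => W (π₁ ij.1) (π₂ ij.2) ω) ∂μ = ∫ ω, Φ (fun ij => W ij.1 ij.2 ω) ∂μ := by
  have h := congrArg (fun ν => ∫ w, Φ w ∂ν) (hexch π₁ π₂)
  rwa [integral_map (measurable_pi_lambda _ fun _ => hW _ _).aemeasurable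
      hΦ.aestronglyMeasurable,
    integral_map (measurable_pi_lambda _ fun _ => hW _ _).aemeasurable
      hΦ.aestronglyMeasurable] at h

theorem SepExch.integral_comp_eq (hexch : SepExch μ W) (hW : ∀ i j, Measurable (W i j))
    {f : E → ℝ} (hf : Measurable f) (i j : ℕ) :
    ∫ ω, f (W i j ω) ∂μ = ∫ ω, f (W 0 0 ω) ∂μ := by
  simpa using hexch.integral_comp_perm hW (hf.comp (measurable_pi_apply (0, 0)))
    (Equiv.swap 0 i) (Equiv.swap 0 j)

theorem SepExch.integral_mul_comp_eq (hexch : SepExch μ W) (hW : ∀ i j, Measurable (W i j))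
    {f : E → ℝ} (hf : Measurable f) {i j k l : ℕ} (hik : i ≠ k) (hjl : j ≠ l) :
    ∫ ω, f (W i j ω) * f (W k l ω) ∂μ = ∫ ω, f (W 0 0 ω) * f (W 1 1 ω) ∂μ := by
  obtain ⟨π₁, hπ₁0, hπ₁1⟩ := Equiv.Perm.exists_apply_zero_apply_one hik
  obtain ⟨π₂, hπ₂0, hπ₂1⟩ := Equiv.Perm.exists_apply_zero_apply_one hjl
  simpa [hπ₁0, hπ₁1, hπ₂0, hπ₂1] using hexch.integral_comp_perm hW
    ((hf.comp (measurable_pi_apply (0, 0))).mul (hf.comp (measurable_pi_apply (1, 1)))) π₁ π₂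

theorem Dissociated.indepFun_zero_zero_one_one (hdiss : Dissociated μ W) :
    IndepFun (W 0 0) (W 1 1) μ :=
  (hdiss 1 1).comp
    (measurable_pi_apply (⟨(0, 0), one_pos, one_pos⟩ : {q : ℕ × ℕ // q.1 < 1 ∧ q.2 < 1}))
    (measurable_pi_apply (⟨(1, 1), le_rfl, le_rfl⟩ : {q : ℕ × ℕ // 1 ≤ q.1 ∧ 1 ≤ q.2}))

theorem SepExch.integral_mul_comp_of_ne (hexch : SepExch μ W) (hdiss : Dissociated μ W)
    (hW : ∀ i j, Measurable (W i j)) {f : E → ℝ} (hf : Measurable f) {i j k l : ℕ}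
    (hik : i ≠ k) (hjl : j ≠ l) :
    ∫ ω, f (W i j ω) * f (W k l ω) ∂μ = (∫ ω, f (W 0 0 ω) ∂μ) ^ 2 := by
  have hindep : ∫ ω, f (W 0 0 ω) * f (W 1 1 ω) ∂μ =
      (∫ ω, f (W 0 0 ω) ∂μ) * ∫ ω, f (W 1 1 ω) ∂μ :=
    (hdiss.indepFun_zero_zero_one_one.comp hf hf).integral_fun_mul_eq_mul_integral
      (hf.comp (hW 0 0)).aestronglyMeasurable (hf.comp (hW 1 1)).aestronglyMeasurable
  rw [hexch.integral_mul_comp_eq hW hf hik hjl, hindep, hexch.integral_comp_eq hW hf 1 1, sq]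

end ExchangeableArray

theorem sum_sum_ite_overlap (N M : ℕ) (a b : ℝ) :
    ∑ q ∈ range N ×ˢ range M, ∑ r ∈ range N ×ˢ range M,
      ((if q = r then a else 0) + (if q.1 = r.1 then b else 0) + (if q.2 = r.2 then b else 0)) =
      N * M * a + N * M * (M + N) * b := by
  simp only [sum_add_distrib, sum_ite, sum_const_zero, add_zero, sum_const, nsmul_eq_mul,
    filter_product_left, filter_product_right, card_product, Finset.filter_eq]
  rw [sum_product, sum_product, sum_product]
  simp +contextual only [mem_product, and_self, ↓reduceIte, card_singleton,
    Nat.cast_one, one_mul, sum_const, card_range, nsmul_eq_mul, mul_one]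
  ring

structure IsBernoulliArray {Ω : Type*} [MeasurableSpace Ω] (μ : Measure Ω)
    (Z : ℕ → ℕ → Ω → ℝ) (p : ℝ) : Prop where
  measurable : ∀ i j, Measurable (Z i j)
  eq_zero_or_eq_one : ∀ i j ω, Z i j ω = 0 ∨ Z i j ω = 1
  measure_eq_one : ∀ i j, μ {ω | Z i j ω = 1} = ENNReal.ofReal p
  iIndepFun : iIndepFun (fun ij : ℕ × ℕ => Z ij.1 ij.2) μ

namespace IsBernoulliArray

variable {Ω : Type*} [MeasurableSpace Ω] {μ : Measure Ω} {Z : ℕ → ℕ → Ω → ℝ} {p : ℝ}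

theorem abs_le_one (hZ : IsBernoulliArray μ Z p) (i j : ℕ) (ω : Ω) : |Z i j ω| ≤ 1 := by
  rcases hZ.eq_zero_or_eq_one i j ω with h | h <;> simp [h]

theorem mul_self (hZ : IsBernoulliArray μ Z p) (i j : ℕ) (ω : Ω) :
    Z i j ω * Z i j ω = Z i j ω := by
  rcases hZ.eq_zero_or_eq_one i j ω with h | h <;> simp [h]

theorem integral_eq (hZ : IsBernoulliArray μ Z p) (hp : 0 ≤ p) (i j : ℕ) : μ[Z i j] = p := by
  have hind : Z i j = {ω | Z i j ω = 1}.indicator 1 := by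
    ext ω
    rcases hZ.eq_zero_or_eq_one i j ω with h | h <;> simp [h]
  have hset : MeasurableSet {ω | Z i j ω = 1} := hZ.measurable i j (measurableSet_singleton 1)
  rw [hind, integral_indicator_one hset, measureReal_def, hZ.measure_eq_one,
    ENNReal.toReal_ofReal hp]

theorem integral_mul (hZ : IsBernoulliArray μ Z p) (hp : 0 ≤ p) (q r : ℕ × ℕ) :
    ∫ ω, Z q.1 q.2 ω * Z r.1 r.2 ω ∂μ = if q = r then p else p ^ 2 := by
  split_ifs with h
  · simp_rw [h, hZ.mul_self, hZ.integral_eq hp]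
  · rw [(hZ.iIndepFun.indepFun h).integral_fun_mul_eq_mul_integral
      (hZ.measurable _ _).aestronglyMeasurable (hZ.measurable _ _).aestronglyMeasurable,
      hZ.integral_eq hp, hZ.integral_eq hp, sq]

end IsBernoulliArray

structure HasDissociatedMoments {Ω : Type*} [MeasurableSpace Ω] (μ : Measure Ω)
    (g : ℕ → ℕ → Ω → ℝ) (C m : ℝ) : Prop where
  measurable : ∀ i j, Measurable (g i j)
  abs_le : ∀ i j ω, |g i j ω| ≤ C
  integral_eq : ∀ i j, μ[g i j] = m
  integral_mul_of_ne : ∀ {i j k l}, i ≠ k → j ≠ l → ∫ ω, g i j ω * g k l ω ∂μ = m ^ 2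

section Subsample

variable {Ω : Type*} [MeasurableSpace Ω] {μ : Measure Ω}
  {Z : ℕ → ℕ → Ω → ℝ} {p : ℝ} {g : ℕ → ℕ → Ω → ℝ} {C m : ℝ}

theorem integral_mul_le_sq_of_abs_le [IsProbabilityMeasure μ] (hgC : ∀ i j ω, |g i j ω| ≤ C)
    (q r : ℕ × ℕ) : ∫ ω, g q.1 q.2 ω * g r.1 r.2 ω ∂μ ≤ C ^ 2 := by
  have hbound : ∀ ω, ‖g q.1 q.2 ω * g r.1 r.2 ω‖ ≤ C ^ 2 := fun ω => by
    rw [norm_mul, Real.norm_eq_abs, Real.norm_eq_abs, sq]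
    exact mul_le_mul (hgC _ _ ω) (hgC _ _ ω) (abs_nonneg _) ((abs_nonneg _).trans (hgC 0 0 ω))
  simpa using (le_abs_self _).trans
    (norm_integral_le_of_norm_le_const (μ := μ) (ae_of_all _ hbound))

theorem memLp_subsample [IsFiniteMeasure μ] (hZ : IsBernoulliArray μ Z p)
    (hg : ∀ i j, Measurable (g i j)) (hgC : ∀ i j ω, |g i j ω| ≤ C) (q : ℕ × ℕ) :
    MemLp (fun ω => Z q.1 q.2 ω * g q.1 q.2 ω) 2 μ := by
  refine MemLp.of_bound ((hZ.measurable _ _).mul (hg _ _)).aestronglyMeasurable C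
    (ae_of_all _ fun ω => ?_)
  rw [norm_mul, Real.norm_eq_abs, Real.norm_eq_abs]
  exact (mul_le_mul (hZ.abs_le_one _ _ ω) (hgC _ _ ω) (abs_nonneg _) zero_le_one).trans_eq
    (one_mul C)

theorem integral_subsample (hZ : IsBernoulliArray μ Z p) (hp : 0 ≤ p)
    (hg : ∀ i j, Measurable (g i j)) (hgm : ∀ i j, μ[g i j] = m)
    (hZg : IndepFun (fun ω (ij : ℕ × ℕ) => Z ij.1 ij.2 ω)
      (fun ω (ij : ℕ × ℕ) => g ij.1 ij.2 ω) μ)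
    (q : ℕ × ℕ) :
    ∫ ω, Z q.1 q.2 ω * g q.1 q.2 ω ∂μ = p * m := by
  have h : ∫ ω, Z q.1 q.2 ω * g q.1 q.2 ω ∂μ = μ[Z q.1 q.2] * μ[g q.1 q.2] :=
    (hZg.comp (measurable_pi_apply q) (measurable_pi_apply q)).integral_fun_mul_eq_mul_integral
      (hZ.measurable _ _).aestronglyMeasurable (hg _ _).aestronglyMeasurable
  rw [h, hZ.integral_eq hp, hgm]

theorem integral_subsample_mul (hZ : IsBernoulliArray μ Z p) (hp : 0 ≤ p)
    (hg : ∀ i j, Measurable (g i j))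
    (hZg : IndepFun (fun ω (ij : ℕ × ℕ) => Z ij.1 ij.2 ω)
      (fun ω (ij : ℕ × ℕ) => g ij.1 ij.2 ω) μ)
    (q r : ℕ × ℕ) :
    ∫ ω, (Z q.1 q.2 ω * g q.1 q.2 ω) * (Z r.1 r.2 ω * g r.1 r.2 ω) ∂μ =
      (if q = r then p else p ^ 2) * ∫ ω, g q.1 q.2 ω * g r.1 r.2 ω ∂μ := by
  have h : ∫ ω, (Z q.1 q.2 ω * Z r.1 r.2 ω) * (g q.1 q.2 ω * g r.1 r.2 ω) ∂μ =
      (∫ ω, Z q.1 q.2 ω * Z r.1 r.2 ω ∂μ) * ∫ ω, g q.1 q.2 ω * g r.1 r.2 ω ∂μ :=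
    (hZg.comp ((measurable_pi_apply q).mul (measurable_pi_apply r))
      ((measurable_pi_apply q).mul (measurable_pi_apply r))).integral_fun_mul_eq_mul_integral
      ((hZ.measurable _ _).mul (hZ.measurable _ _)).aestronglyMeasurable
      ((hg _ _).mul (hg _ _)).aestronglyMeasurable
  rw [← hZ.integral_mul hp, ← h]
  congr 1 with ω
  ring

theorem covariance_subsample_le [IsProbabilityMeasure μ] (hZ : IsBernoulliArray μ Z p)
    (hp : 0 ≤ p) (hg : HasDissociatedMoments μ g C m)
    (hZg : IndepFun (fun ω (ij : ℕ × ℕ) => Z ij.1 ij.2 ω)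
      (fun ω (ij : ℕ × ℕ) => g ij.1 ij.2 ω) μ)
    (q r : ℕ × ℕ) :
    cov[fun ω => Z q.1 q.2 ω * g q.1 q.2 ω, fun ω => Z r.1 r.2 ω * g r.1 r.2 ω; μ] ≤
      (if q = r then p * C ^ 2 else 0) + (if q.1 = r.1 then p ^ 2 * C ^ 2 else 0) +
        (if q.2 = r.2 then p ^ 2 * C ^ 2 else 0) := by
  rw [covariance_eq_sub (memLp_subsample hZ hg.measurable hg.abs_le q)
    (memLp_subsample hZ hg.measurable hg.abs_le r)]
  simp only [Pi.mul_apply]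
  rw [integral_subsample_mul hZ hp hg.measurable hZg,
    integral_subsample hZ hp hg.measurable hg.integral_eq hZg,
    integral_subsample hZ hp hg.measurable hg.integral_eq hZg]
  have hgg_le := integral_mul_le_sq_of_abs_le (μ := μ) hg.abs_le q r
  have hpC : 0 ≤ p ^ 2 * C ^ 2 := by positivity
  by_cases hqr : q = r
  · subst hqr
    simp only [if_true]
    nlinarith [sq_nonneg (p * m)]
  by_cases hshare : q.1 = r.1 ∨ q.2 = r.2
  · rcases hshare with h | h <;> split_ifs <;> nlinarith [sq_nonneg (p * m)]
  · push Not at hshare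
    simp only [hqr, hshare.1, hshare.2, if_false, hg.integral_mul_of_ne hshare.1 hshare.2]
    nlinarith

theorem variance_sum_subsample_le [IsProbabilityMeasure μ] (hZ : IsBernoulliArray μ Z p)
    (hp : 0 ≤ p) (hg : HasDissociatedMoments μ g C m)
    (hZg : IndepFun (fun ω (ij : ℕ × ℕ) => Z ij.1 ij.2 ω)
      (fun ω (ij : ℕ × ℕ) => g ij.1 ij.2 ω) μ)
    (N M : ℕ) :
    Var[fun ω => ∑ q ∈ range N ×ˢ range M, Z q.1 q.2 ω * g q.1 q.2 ω; μ] ≤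
      N * M * (p * C ^ 2) + N * M * (M + N) * (p ^ 2 * C ^ 2) := by
  rw [variance_fun_sum' fun q _ => memLp_subsample hZ hg.measurable hg.abs_le q,
    ← sum_sum_ite_overlap]
  exact sum_le_sum fun q _ => sum_le_sum fun r _ => covariance_subsample_le hZ hp hg hZg q r

theorem tendstoInMeasure_subsample_mean [IsProbabilityMeasure μ] {Z : ℕ → ℕ → ℕ → Ω → ℝ}
    {p : ℕ → ℝ} {N M : ℕ → ℕ} (hZ : ∀ n, IsBernoulliArray μ (Z n) (p n)) (hp : ∀ n, 0 ≤ p n)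
    (hg : HasDissociatedMoments μ g C m)
    (hZg : ∀ n, IndepFun (fun ω (ij : ℕ × ℕ) => Z n ij.1 ij.2 ω)
      (fun ω (ij : ℕ × ℕ) => g ij.1 ij.2 ω) μ)
    (hmin : Tendsto (fun n => min (N n) (M n)) atTop atTop)
    (hLtop : Tendsto (fun n => (N n : ℝ) * M n * p n) atTop atTop) :
    TendstoInMeasure μ
      (fun n ω => (∑ q ∈ range (N n) ×ˢ range (M n), Z n q.1 q.2 ω * g q.1 q.2 ω) /
        (N n * M n * p n)) atTop (fun _ => m) := by
  have hpos : ∀ᶠ n in atTop, (N n : ℝ) ≠ 0 ∧ (M n : ℝ) ≠ 0 ∧ p n ≠ 0 := by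
    filter_upwards [hLtop.eventually_gt_atTop 0] with n hn
    simpa only [mul_ne_zero_iff, and_assoc] using hn.ne'
  have hN : Tendsto (fun n => (N n : ℝ)) atTop atTop :=
    tendsto_natCast_atTop_atTop.comp (tendsto_atTop_mono (fun n => min_le_left _ _) hmin)
  have hM : Tendsto (fun n => (M n : ℝ)) atTop atTop :=
    tendsto_natCast_atTop_atTop.comp (tendsto_atTop_mono (fun n => min_le_right _ _) hmin)
  have hbound : Tendsto
      (fun n => C ^ 2 * ((N n * M n * p n : ℝ)⁻¹ + ((N n : ℝ)⁻¹ + (M n : ℝ)⁻¹))) atTop (𝓝 0) := by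
    simpa using (hLtop.inv_tendsto_atTop.add
      (hN.inv_tendsto_atTop.add hM.inv_tendsto_atTop)).const_mul (C ^ 2)
  refine tendstoInMeasure_const_of_variance_tendsto_zero (fun n => by
    simpa only [div_eq_mul_inv] using (memLp_finsetSum _ fun q _ =>
      memLp_subsample (hZ n) hg.measurable hg.abs_le q).mul_const _) ?_ ?_
  · filter_upwards [hpos] with n ⟨hN0, hM0, hp0⟩
    rw [integral_div, integral_finsetSum _ fun q _ =>
      (memLp_subsample (hZ n) hg.measurable hg.abs_le q).integrable one_le_two]
    simp only [integral_subsample (hZ n) (hp n) hg.measurable hg.integral_eq (hZg n), sum_const,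
      card_product, card_range, nsmul_eq_mul, Nat.cast_mul]
    field_simp
  · refine squeeze_zero' (Eventually.of_forall fun n => variance_nonneg _ _) ?_ hbound
    filter_upwards [hpos] with n ⟨hN0, hM0, hp0⟩
    simp_rw [div_eq_mul_inv]
    rw [variance_mul_const]
    calc _ ≤ (N n * M n * (p n * C ^ 2) + N n * M n * (M n + N n) * (p n ^ 2 * C ^ 2)) *
          (N n * M n * p n : ℝ)⁻¹ ^ 2 := by
          gcongr
          exact variance_sum_subsample_le (hZ n) (hp n) hg (hZg n) _ _
      _ = _ := by field_simp

end Subsample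

/-- Weak law of large numbers for Bernoulli-subsampled multiway clustered data:
for a separately exchangeable, dissociated array `W`, a bounded measurable `f` with
mean `m₀`, and i.i.d. Bernoulli(`p n`) selectors `Z n` independent of the data with
`N n · M n · p n → ∞`, the subsample mean `hatL⁻¹ ∑ Z f(W)` converges to `m₀`
in probability as `min{N n, M n} → ∞`. -/
theorem stmt12 {Ω E : Type*} [MeasurableSpace Ω] [MeasurableSpace E]
    (μ : Measure Ω) [IsProbabilityMeasure μ]
    (W : ℕ → ℕ → Ω → E) (hWmeas : ∀ i j, Measurable (W i j))
    (hexch : SepExch μ W) (hdiss : Dissociated μ W)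
    (f : E → ℝ) (hf : Measurable f) (Cb : ℝ) (hCb : ∀ x, |f x| ≤ Cb)
    (m₀ : ℝ) (hm₀ : ∫ ω, f (W 0 0 ω) ∂μ = m₀)
    (N M : ℕ → ℕ) (p : ℕ → ℝ) (hp : ∀ n, p n ∈ Set.Ioc (0 : ℝ) 1)
    (Z : ℕ → ℕ → ℕ → Ω → ℝ) (hZmeas : ∀ n i j, Measurable (Z n i j))
    (hZval : ∀ n i j ω, Z n i j ω = 0 ∨ Z n i j ω = 1)
    (hZp : ∀ n i j, μ {ω | Z n i j ω = 1} = ENNReal.ofReal (p n))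
    (hZiid : ∀ n, iIndepFun
      (fun ij : ℕ × ℕ => Z n ij.1 ij.2) μ)
    (hZW : IndepFun (fun ω (nij : ℕ × ℕ × ℕ) => Z nij.1 nij.2.1 nij.2.2 ω)
                    (fun ω (ij : ℕ × ℕ) => W ij.1 ij.2 ω) μ)
    (hmin : Tendsto (fun n => min (N n) (M n)) atTop atTop)
    (hLtop : Tendsto (fun n => (N n : ℝ) * M n * p n) atTop atTop) :
    TendstoInMeasure μ
      (fun n ω =>
        (∑ i ∈ Finset.range (N n), ∑ j ∈ Finset.range (M n), Z n i j ω)⁻¹ *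
          ∑ i ∈ Finset.range (N n), ∑ j ∈ Finset.range (M n), Z n i j ω * f (W i j ω))
      atTop (fun _ => m₀) := by
  have hZ : ∀ n, IsBernoulliArray μ (Z n) (p n) := fun n => ⟨hZmeas n, hZval n, hZp n, hZiid n⟩
  have hp0 : ∀ n, 0 ≤ p n := fun n => (hp n).1.le
  have hZW' : ∀ n, IndepFun (fun ω (ij : ℕ × ℕ) => Z n ij.1 ij.2 ω)
      (fun ω (ij : ℕ × ℕ) => W ij.1 ij.2 ω) μ := fun n =>
    hZW.comp (measurable_pi_lambda _ fun ij => measurable_pi_apply (n, ij)) measurable_id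
  have hfW : HasDissociatedMoments μ (fun i j ω => f (W i j ω)) Cb m₀ :=
    ⟨fun i j => hf.comp (hWmeas i j), fun i j ω => hCb (W i j ω),
      fun i j => (hexch.integral_comp_eq hWmeas hf i j).trans hm₀,
      fun hik hjl => hm₀ ▸ hexch.integral_mul_comp_of_ne hdiss hWmeas hf hik hjl⟩
  have hone : HasDissociatedMoments μ (fun _ _ _ => 1) 1 1 :=
    ⟨fun _ _ => measurable_const, fun _ _ _ => by simp, fun _ _ => by simp, fun _ _ => by simp⟩
  have hS := tendstoInMeasure_subsample_mean hZ hp0 hfW (fun n => (hZW' n).comp measurable_id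
    (measurable_pi_lambda _ fun ij => hf.comp (measurable_pi_apply ij))) hmin hLtop
  have hL := tendstoInMeasure_subsample_mean hZ hp0 hone
    (fun n => (hZW' n).comp measurable_id measurable_const) hmin hLtop
  have hratio := (hL.prodMk hS).comp_continuousAt (φ := fun x : ℝ × ℝ => x.1⁻¹ * x.2)
    ((continuousAt_fst.inv₀ one_ne_zero).mul continuousAt_snd)
  simp only [inv_one, one_mul, mul_one] at hratio
  refine hratio.congr' ?_ EventuallyEq.rfl
  filter_upwards [hLtop.eventually_gt_atTop 0] with n hn
  refine Eventually.of_forall fun ω => ?_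
  simp only [← sum_product', inv_div, div_mul_div_comm]
  rw [mul_comm, mul_div_mul_right _ _ hn.ne', div_eq_inv_mul]
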